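/- Let G be the complete k-uniform hypergraph on [n] with 1 ≤ k ≤ n, (R_e)_e mutually independent, R_i = (R_e : i ∈ e). Suppose M is generated from (R_1,...,R_n) by a blackboard protocol (at each round the writer is determined by the transcript so far, and writes a deterministic function of its local R_i and the transcript), and X is a discrete random variable that is a deterministic function of (R_i, M) for every i ∈ [n]. Then H(M) ≥ ((n-k)/(n-1)) · H(X). -/

import Mathlib

/-- Probability that the random variable `X` (on finite outcome space `Ω`
with probability mass function `p`) takes the value `a`. -/
noncomputable def pmass {Ω α : Type*} [Fintype Ω] [DecidableEq α]
    (p : Ω → ℝ) (X : Ω → α) (a : α) : ℝ :=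
  ∑ ω, if X ω = a then p ω else 0

/-- Shannon entropy (in bits) of a finitely valued random variable. -/
noncomputable def ent {Ω α : Type*} [Fintype Ω] [Fintype α] [DecidableEq α]
    (p : Ω → ℝ) (X : Ω → α) : ℝ :=
  ∑ a, -(pmass p X a * Real.logb 2 (pmass p X a))

/-- Conditional Shannon entropy `H(X | Y) = H(X, Y) - H(Y)`. -/
noncomputable def condEnt {Ω α β : Type*} [Fintype Ω] [Fintype α] [Fintype β]
    [DecidableEq α] [DecidableEq β] (p : Ω → ℝ) (X : Ω → α) (Y : Ω → β) : ℝ :=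
  ent p (fun ω => (X ω, Y ω)) - ent p Y

/-- `p` is a probability mass function on `Ω`. -/
def IsProb {Ω : Type*} [Fintype Ω] (p : Ω → ℝ) : Prop :=
  (∀ ω, 0 ≤ p ω) ∧ ∑ ω, p ω = 1

/-- Hyperedges of the complete `k`-uniform hypergraph on `Fin n`. -/
abbrev Edge (n k : ℕ) := {s : Finset (Fin n) // s.card = k}

/-!
Order the hyperedges. For a set `S` of edges, the chain rule and submodularity give
`H(X | R_S) ≥ H(X) - ∑_{e ∈ S} I(R_e ; X, R_{<e})`, and by independence of the `R_e` these
informations sum over all edges to at most `H(X)`. Each edge lies in exactly `k` of the `n`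
views `R_i`, so `∑_i H(X | R_i) ≥ (n - k) H(X)`; and `H(X | R_i) ≤ H(M | R_i)` since `X` is a
function of `(R_i, M)`. Finally `H(M | R_i) = ∑_j H(M_j | M_{<j}, R_i)`, and once the history
`M_{<j}` is fixed the writer's term vanishes while the other `n - 1` are at most
`H(M_j | M_{<j})`, whence `∑_i H(M | R_i) ≤ (n - 1) H(M)`.
-/

open Finset Real

section PMass

variable {Ω α β : Type*} [Fintype Ω] [DecidableEq α] [DecidableEq β] {p : Ω → ℝ}

lemma pmass_nonneg (h0 : ∀ ω, 0 ≤ p ω) (X : Ω → α) (a : α) : 0 ≤ pmass p X a :=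
  sum_nonneg fun ω _ => by split <;> simp [h0 ω]

lemma le_pmass_apply (h0 : ∀ ω, 0 ≤ p ω) (X : Ω → α) (ω : Ω) : p ω ≤ pmass p X (X ω) := by
  simpa [pmass] using single_le_sum (f := fun ω' => if X ω' = X ω then p ω' else 0)
    (fun ω' _ => by split <;> simp [h0 ω']) (mem_univ ω)

lemma pmass_apply_pos (h0 : ∀ ω, 0 ≤ p ω) (X : Ω → α) {ω : Ω} (hω : p ω ≠ 0) :
    0 < pmass p X (X ω) :=
  ((h0 ω).lt_of_ne' hω).trans_le (le_pmass_apply h0 X ω)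

lemma pmass_le_one (hp : IsProb p) (X : Ω → α) (a : α) : pmass p X a ≤ 1 := by
  rw [← hp.2]
  exact sum_le_sum fun ω _ => by split <;> simp [hp.1 ω]

lemma pmass_le_pmass (h0 : ∀ ω, 0 ≤ p ω) {X : Ω → α} {Y : Ω → β} {a : α} {b : β}
    (h : ∀ ω, p ω ≠ 0 → X ω = a → Y ω = b) : pmass p X a ≤ pmass p Y b := by
  refine sum_le_sum fun ω _ => ?_
  by_cases hω : p ω = 0
  · simp [hω]
  · by_cases hx : X ω = a
    · simp [hx, h ω hω hx]
    · simp only [hx, if_false]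
      split <;> simp [h0 ω]

lemma pmass_congr {X : Ω → α} {Y : Ω → β} {a : α} {b : β}
    (h : ∀ ω, p ω ≠ 0 → (X ω = a ↔ Y ω = b)) : pmass p X a = pmass p Y b := by
  refine sum_congr rfl fun ω _ => ?_
  by_cases hω : p ω = 0
  · simp [hω]
  · simp only [h ω hω]

lemma pmass_pair_le_right (h0 : ∀ ω, 0 ≤ p ω) (X : Ω → α) (Y : Ω → β) (a : α) (b : β) :
    pmass p (fun ω => (X ω, Y ω)) (a, b) ≤ pmass p Y b :=
  pmass_le_pmass h0 fun _ _ h => congrArg Prod.snd h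

lemma sum_pmass_mul [Fintype α] (X : Ω → α) (φ : α → ℝ) :
    ∑ a, pmass p X a * φ a = ∑ ω, p ω * φ (X ω) := by
  simp_rw [pmass, sum_mul]
  rw [sum_comm]
  refine sum_congr rfl fun ω _ => ?_
  simp [ite_mul]

lemma sum_pmass [Fintype α] (X : Ω → α) : ∑ a, pmass p X a = ∑ ω, p ω := by
  simpa using sum_pmass_mul (p := p) X (fun _ => (1 : ℝ))

lemma sum_pmass_pair_left [Fintype α] (X : Ω → α) (Y : Ω → β) (b : β) :
    ∑ a, pmass p (fun ω => (X ω, Y ω)) (a, b) = pmass p Y b := by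
  simp only [pmass]
  rw [sum_comm]
  refine sum_congr rfl fun ω _ => ?_
  by_cases hb : Y ω = b <;> simp [hb]

lemma sum_pmass_pair_right [Fintype β] (X : Ω → α) (Y : Ω → β) (a : α) :
    ∑ b, pmass p (fun ω => (X ω, Y ω)) (a, b) = pmass p X a := by
  simp only [pmass]
  rw [sum_comm]
  refine sum_congr rfl fun ω _ => ?_
  by_cases ha : X ω = a <;> simp [ha]

/-- `p` conditioned on `Y = b`; identically `0` when `pmass p Y b = 0`. -/
noncomputable def condp (p : Ω → ℝ) (Y : Ω → β) (b : β) : Ω → ℝ :=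
  fun ω => if Y ω = b then p ω / pmass p Y b else 0

lemma pmass_condp (Y : Ω → β) (b : β) (X : Ω → α) (a : α) :
    pmass (condp p Y b) X a = pmass p (fun ω => (X ω, Y ω)) (a, b) / pmass p Y b := by
  simp only [pmass, condp, sum_div]
  refine sum_congr rfl fun ω _ => ?_
  by_cases hx : X ω = a <;> by_cases hy : Y ω = b <;> simp [hx, hy]

lemma condp_isProb (h0 : ∀ ω, 0 ≤ p ω) {Y : Ω → β} {b : β} (hb : pmass p Y b ≠ 0) :
    IsProb (condp p Y b) := by
  refine ⟨fun ω => ?_, ?_⟩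
  · unfold condp
    split
    · exact div_nonneg (h0 ω) (pmass_nonneg h0 Y b)
    · exact le_rfl
  · have h : ∀ ω, condp p Y b ω = (if Y ω = b then p ω else 0) / pmass p Y b := fun ω => by
      unfold condp
      split <;> simp
    rw [sum_congr rfl fun ω _ => h ω, ← sum_div]
    exact div_self hb

lemma eq_and_ne_zero_of_condp_ne_zero {Y : Ω → β} {b : β} {ω : Ω} (h : condp p Y b ω ≠ 0) :
    Y ω = b ∧ p ω ≠ 0 := by
  unfold condp at h
  by_cases hy : Y ω = b
  · exact ⟨hy, fun h0 => h (by simp [hy, h0])⟩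
  · simp [hy] at h

end PMass

section Entropy

variable {Ω α β γ : Type*} [Fintype Ω] [Fintype α] [Fintype β] [Fintype γ]
  [DecidableEq α] [DecidableEq β] [DecidableEq γ] {p : Ω → ℝ}

lemma ent_eq_neg_sum (X : Ω → α) : ent p X = -∑ ω, p ω * logb 2 (pmass p X (X ω)) := by
  rw [ent, ← sum_pmass_mul X (fun a => logb 2 (pmass p X a))]
  simp

lemma ent_congr {X : Ω → α} {Y : Ω → β}
    (h : ∀ ω, p ω ≠ 0 → pmass p X (X ω) = pmass p Y (Y ω)) : ent p X = ent p Y := by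
  rw [ent_eq_neg_sum, ent_eq_neg_sum]
  congr 1
  refine sum_congr rfl fun ω _ => ?_
  by_cases hω : p ω = 0
  · simp [hω]
  · rw [h ω hω]

lemma ent_eq_of_mutually_determined {X : Ω → α} {Y : Ω → β} (f : α → β) (g : β → α)
    (hf : ∀ ω, p ω ≠ 0 → Y ω = f (X ω)) (hg : ∀ ω, p ω ≠ 0 → X ω = g (Y ω)) :
    ent p X = ent p Y :=
  ent_congr fun ω hω => pmass_congr fun ω' hω' =>
    ⟨fun h => by rw [hf ω' hω', h, ← hf ω hω], fun h => by rw [hg ω' hω', h, ← hg ω hω]⟩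

lemma ent_pair_comm (X : Ω → α) (Y : Ω → β) :
    ent p (fun ω => (X ω, Y ω)) = ent p (fun ω => (Y ω, X ω)) :=
  ent_eq_of_mutually_determined Prod.swap Prod.swap (fun _ _ => rfl) (fun _ _ => rfl)

lemma ent_of_subsingleton [Subsingleton α] (hp : IsProb p) (X : Ω → α) : ent p X = 0 := by
  have hX : ∀ ω, pmass p X (X ω) = 1 := fun ω => by
    rw [pmass, ← hp.2]
    exact sum_congr rfl fun ω' _ => by simp [Subsingleton.elim (X ω') (X ω)]
  simp [ent_eq_neg_sum, hX]

lemma ent_nonneg (hp : IsProb p) (X : Ω → α) : 0 ≤ ent p X :=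
  sum_nonneg fun a _ => neg_nonneg.mpr <| mul_nonpos_of_nonneg_of_nonpos
    (pmass_nonneg hp.1 X a) (logb_nonpos one_lt_two (pmass_nonneg hp.1 X a) (pmass_le_one hp X a))

lemma ent_le_ent_pair (h0 : ∀ ω, 0 ≤ p ω) (X : Ω → α) (Y : Ω → β) :
    ent p Y ≤ ent p (fun ω => (X ω, Y ω)) := by
  rw [ent_eq_neg_sum, ent_eq_neg_sum, neg_le_neg_iff]
  refine sum_le_sum fun ω _ => ?_
  by_cases hω : p ω = 0
  · simp [hω]
  · refine mul_le_mul_of_nonneg_left ?_ (h0 ω)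
    exact logb_le_logb_of_le one_lt_two (pmass_apply_pos h0 _ hω)
      (pmass_pair_le_right h0 X Y (X ω) (Y ω))

lemma sum_mul_logb_le (h0 : ∀ ω, 0 ≤ p ω) (r : Ω → ℝ) (hr : ∀ ω, p ω ≠ 0 → 0 < r ω) :
    ∑ ω, p ω * logb 2 (r ω) ≤ (∑ ω, p ω * r ω - ∑ ω, p ω) / log 2 := by
  rw [← sum_sub_distrib, sum_div]
  refine sum_le_sum fun ω _ => ?_
  by_cases hω : p ω = 0
  · simp [hω]
  · rw [logb, ← mul_sub_one, mul_div_assoc]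
    exact mul_le_mul_of_nonneg_left
      (div_le_div_of_nonneg_right (log_le_sub_one_of_pos (hr ω hω)) (log_pos one_lt_two).le)
      (h0 ω)

lemma sum_mul_pmass_ratio_le (h0 : ∀ ω, 0 ≤ p ω) (X : Ω → α) (Y : Ω → β) (Z : Ω → γ) :
    ∑ ω, p ω * (pmass p (fun ω => (X ω, Y ω)) (X ω, Y ω) * pmass p (fun ω => (Y ω, Z ω)) (Y ω, Z ω)
      / (pmass p (fun ω => (X ω, Y ω, Z ω)) (X ω, Y ω, Z ω) * pmass p Y (Y ω))) ≤ ∑ ω, p ω := by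
  set qXY := pmass p (fun ω => (X ω, Y ω))
  set qYZ := pmass p (fun ω => (Y ω, Z ω))
  set qY := pmass p Y
  set q := pmass p (fun ω => (X ω, Y ω, Z ω))
  rw [← sum_pmass_mul (fun ω => (X ω, Y ω, Z ω))
    (fun t => qXY (t.1, t.2.1) * qYZ (t.2.1, t.2.2) / (q t * qY t.2.1))]
  have hterm : ∀ t : α × β × γ, q t * (qXY (t.1, t.2.1) * qYZ (t.2.1, t.2.2) / (q t * qY t.2.1))
      ≤ qXY (t.1, t.2.1) * qYZ (t.2.1, t.2.2) / qY t.2.1 := fun t => by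
    by_cases ht : q t = 0
    · rw [ht, zero_mul]
      exact div_nonneg (mul_nonneg (pmass_nonneg h0 _ _) (pmass_nonneg h0 _ _))
        (pmass_nonneg h0 _ _)
    · rw [mul_div_assoc', mul_div_mul_left _ _ ht]
  have hb : ∀ b, ∑ a, ∑ c, qXY (a, b) * qYZ (b, c) / qY b ≤ qY b := fun b => by
    have hYZ : ∑ c, qYZ (b, c) = qY b := sum_pmass_pair_right Y Z b
    have hXY : ∑ a, qXY (a, b) = qY b := sum_pmass_pair_left X Y b
    simp_rw [mul_div_assoc, ← mul_sum, ← sum_div, hYZ, ← sum_mul, hXY]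
    by_cases hb : qY b = 0
    · simp [hb]
    · rw [div_self hb, mul_one]
  calc ∑ t, q t * (qXY (t.1, t.2.1) * qYZ (t.2.1, t.2.2) / (q t * qY t.2.1))
      ≤ ∑ t : α × β × γ, qXY (t.1, t.2.1) * qYZ (t.2.1, t.2.2) / qY t.2.1 :=
        sum_le_sum fun t _ => hterm t
    _ = ∑ b, ∑ a, ∑ c, qXY (a, b) * qYZ (b, c) / qY b := by
        simp_rw [Fintype.sum_prod_type]
        exact sum_comm
    _ ≤ ∑ b, qY b := sum_le_sum fun b _ => hb b
    _ = ∑ ω, p ω := sum_pmass Y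

lemma ent_submodular (h0 : ∀ ω, 0 ≤ p ω) (X : Ω → α) (Y : Ω → β) (Z : Ω → γ) :
    ent p (fun ω => (X ω, Y ω, Z ω)) + ent p Y ≤
      ent p (fun ω => (X ω, Y ω)) + ent p (fun ω => (Y ω, Z ω)) := by
  set qXY := pmass p (fun ω => (X ω, Y ω))
  set qYZ := pmass p (fun ω => (Y ω, Z ω))
  set qY := pmass p Y
  set q := pmass p (fun ω => (X ω, Y ω, Z ω))
  have hpos : ∀ ω, p ω ≠ 0 → 0 < qXY (X ω, Y ω) ∧ 0 < qYZ (Y ω, Z ω) ∧ 0 < q (X ω, Y ω, Z ω)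
      ∧ 0 < qY (Y ω) := fun ω hω =>
    ⟨pmass_apply_pos h0 _ hω, pmass_apply_pos h0 _ hω, pmass_apply_pos h0 _ hω,
      pmass_apply_pos h0 _ hω⟩
  have hterm : ∀ ω, p ω * logb 2 (qXY (X ω, Y ω) * qYZ (Y ω, Z ω) / (q (X ω, Y ω, Z ω) * qY (Y ω)))
      = p ω * logb 2 (qXY (X ω, Y ω)) + p ω * logb 2 (qYZ (Y ω, Z ω))
        - p ω * logb 2 (q (X ω, Y ω, Z ω)) - p ω * logb 2 (qY (Y ω)) := fun ω => by
    by_cases hω : p ω = 0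
    · simp [hω]
    obtain ⟨_, _, _, _⟩ := hpos ω hω
    rw [logb_div (by positivity) (by positivity), logb_mul (by positivity) (by positivity),
      logb_mul (by positivity) (by positivity)]
    ring
  have gibbs : ∑ ω, p ω * logb 2
      (qXY (X ω, Y ω) * qYZ (Y ω, Z ω) / (q (X ω, Y ω, Z ω) * qY (Y ω))) ≤ 0 :=
    (sum_mul_logb_le h0 _ fun ω hω => by
      obtain ⟨_, _, _, _⟩ := hpos ω hω
      positivity).trans
    (div_nonpos_of_nonpos_of_nonneg (sub_nonpos.mpr (sum_mul_pmass_ratio_le h0 X Y Z))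
      (log_pos one_lt_two).le)
  simp only [hterm, sum_sub_distrib, sum_add_distrib] at gibbs
  simp only [ent_eq_neg_sum]
  linarith

lemma ent_pair_le_add (hp : IsProb p) (X : Ω → α) (Z : Ω → γ) :
    ent p (fun ω => (X ω, Z ω)) ≤ ent p X + ent p Z := by
  have h := ent_submodular hp.1 X (fun _ => ()) Z
  rwa [ent_of_subsingleton hp (fun _ : Ω => ()),
    ent_eq_of_mutually_determined (fun t => (t.1, t.2.2)) (fun t => (t.1, (), t.2))
      (fun _ _ => rfl) (fun _ _ => rfl),
    ent_eq_of_mutually_determined Prod.fst (fun a => (a, ())) (fun _ _ => rfl) (fun _ _ => rfl),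
    ent_eq_of_mutually_determined Prod.snd (fun c => ((), c)) (fun _ _ => rfl) (fun _ _ => rfl),
    add_zero] at h

lemma condEnt_le_ent (hp : IsProb p) (X : Ω → α) (Y : Ω → β) : condEnt p X Y ≤ ent p X := by
  have := ent_pair_le_add hp X Y
  rw [condEnt]
  linarith

lemma condEnt_eq_zero_of_determined {X : Ω → α} {Y : Ω → β}
    (h : ∀ ω ω', p ω ≠ 0 → p ω' ≠ 0 → Y ω = Y ω' → X ω = X ω') : condEnt p X Y = 0 := by
  rw [condEnt, sub_eq_zero]
  exact ent_congr fun ω hω => pmass_congr fun ω' hω' =>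
    ⟨fun h' => congrArg Prod.snd h', fun h' => Prod.ext (h ω' ω hω' hω h') h'⟩

lemma condEnt_congr_right {X : Ω → α} {Y : Ω → β} {Y' : Ω → γ} (f : β → γ) (g : γ → β)
    (hf : ∀ ω, p ω ≠ 0 → Y' ω = f (Y ω)) (hg : ∀ ω, p ω ≠ 0 → Y ω = g (Y' ω)) :
    condEnt p X Y = condEnt p X Y' := by
  rw [condEnt, condEnt, ent_eq_of_mutually_determined f g hf hg,
    ent_eq_of_mutually_determined (Y := fun ω => (X ω, Y' ω)) (Prod.map id f) (Prod.map id g)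
      (fun ω hω => by rw [Prod.map_apply, hf ω hω]; rfl)
      (fun ω hω => by rw [Prod.map_apply, hg ω hω]; rfl)]

lemma condEnt_const (hp : IsProb p) (X : Ω → α) : condEnt p X (fun _ => ()) = ent p X := by
  rw [condEnt, ent_of_subsingleton hp (fun _ : Ω => ()), sub_zero]
  exact ent_eq_of_mutually_determined Prod.fst (fun a => (a, ())) (fun _ _ => rfl)
    (fun _ _ => rfl)

lemma condEnt_le_condEnt_of_determined (h0 : ∀ ω, 0 ≤ p ω) {X : Ω → α} {Y : Ω → β}
    {Z : Ω → γ} (g : β → γ → α) (hg : ∀ ω, p ω ≠ 0 → X ω = g (Y ω) (Z ω)) :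
    condEnt p X Y ≤ condEnt p Z Y := by
  have h := ent_le_ent_pair h0 Z (fun ω => (X ω, Y ω))
  rw [ent_eq_of_mutually_determined (fun t => (t.1, t.2.2)) (fun u => (u.1, g u.2 u.1, u.2))
    (fun _ _ => rfl) (fun ω hω => by rw [← hg ω hω])] at h
  rw [condEnt, condEnt]
  linarith

lemma ent_pair_eq_add_sum_condp (h0 : ∀ ω, 0 ≤ p ω) (X : Ω → α) (Y : Ω → β) :
    ent p (fun ω => (X ω, Y ω)) = ent p Y + ∑ b, pmass p Y b * ent (condp p Y b) X := by
  have hfiber : ∀ b, ∑ a, -(pmass p (fun ω => (X ω, Y ω)) (a, b)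
        * logb 2 (pmass p (fun ω => (X ω, Y ω)) (a, b)))
      = -(pmass p Y b * logb 2 (pmass p Y b)) + pmass p Y b * ent (condp p Y b) X := fun b => by
    by_cases hb : pmass p Y b = 0
    · have hz : ∀ a, pmass p (fun ω => (X ω, Y ω)) (a, b) = 0 := fun a =>
        le_antisymm (hb ▸ pmass_pair_le_right h0 X Y a b) (pmass_nonneg h0 _ _)
      simp [hb, hz]
    have ha : ∀ a, pmass p Y b * -(pmass (condp p Y b) X a * logb 2 (pmass (condp p Y b) X a))
        = -(pmass p (fun ω => (X ω, Y ω)) (a, b) * logb 2 (pmass p (fun ω => (X ω, Y ω)) (a, b)))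
          + pmass p (fun ω => (X ω, Y ω)) (a, b) * logb 2 (pmass p Y b) := fun a => by
      rw [pmass_condp]
      by_cases ha : pmass p (fun ω => (X ω, Y ω)) (a, b) = 0
      · simp [ha]
      · rw [logb_div ha hb]
        field_simp
        ring
    rw [ent, mul_sum, sum_congr rfl fun a _ => ha a, sum_add_distrib, ← sum_mul,
      sum_pmass_pair_left X Y b]
    ring
  rw [ent, Fintype.sum_prod_type, sum_comm, sum_congr rfl fun b _ => hfiber b, sum_add_distrib]
  rfl

lemma condEnt_eq_sum_condp (h0 : ∀ ω, 0 ≤ p ω) (X : Ω → α) (Y : Ω → β) :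
    condEnt p X Y = ∑ b, pmass p Y b * ent (condp p Y b) X := by
  rw [condEnt, ent_pair_eq_add_sum_condp h0 X Y]
  ring

lemma condEnt_pair_eq_sum_condp (h0 : ∀ ω, 0 ≤ p ω) (X : Ω → α) (Y : Ω → β) (Z : Ω → γ) :
    condEnt p X (fun ω => (Y ω, Z ω)) = ∑ b, pmass p Y b * condEnt (condp p Y b) X Z := by
  have e1 : ent p (fun ω => (X ω, Y ω, Z ω)) = ent p (fun ω => ((X ω, Z ω), Y ω)) :=
    ent_eq_of_mutually_determined (fun t => ((t.1, t.2.2), t.2.1)) (fun t => (t.1.1, t.2, t.1.2))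
      (fun _ _ => rfl) (fun _ _ => rfl)
  rw [condEnt, e1, ent_pair_comm Y Z, ent_pair_eq_add_sum_condp h0 (fun ω => (X ω, Z ω)) Y,
    ent_pair_eq_add_sum_condp h0 Z Y, add_sub_add_left_eq_sub, ← sum_sub_distrib]
  exact sum_congr rfl fun b _ => (mul_sub _ _ _).symm

end Entropy

lemma dite_mem_restrict_eq_restrict_insert {ι ρ : Type*} [DecidableEq ι] (f : ι → ρ) (a : ι)
    (T : Finset ι) :
    (fun e : (insert a T : Finset ι) => if h : e.1 ∈ T then T.restrict f ⟨e, h⟩ else f a) =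
      (insert a T).restrict f := by
  funext ⟨e, he⟩
  split
  · rfl
  · next h => obtain rfl := (mem_insert.mp he).resolve_right h; rfl

section Restrict

variable {Ω ι ρ α : Type*} [Fintype Ω] [DecidableEq ι] [Fintype ρ] [DecidableEq ρ]
  [Fintype α] [DecidableEq α] {p : Ω → ℝ}

lemma ent_pi_eq_sum_of_indep [Fintype ι] (h0 : ∀ ω, 0 ≤ p ω) (R : ι → Ω → ρ)
    (hindep : ∀ x : ι → ρ, pmass p (fun ω e => R e ω) x = ∏ e, pmass p (R e) (x e)) :
    ent p (fun ω e => R e ω) = ∑ e, ent p (R e) := by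
  simp_rw [ent_eq_neg_sum, ← sum_neg_distrib]
  rw [sum_comm]
  refine sum_congr rfl fun ω _ => ?_
  by_cases hω : p ω = 0
  · simp [hω]
  · rw [hindep, logb_prod _ _ fun e _ => (pmass_apply_pos h0 (R e) hω).ne', mul_sum,
      sum_neg_distrib]

lemma ent_restrict_insert (R : ι → Ω → ρ) (a : ι) (T : Finset ι) :
    ent p (fun ω => (insert a T).restrict (R · ω)) = ent p (fun ω => (R a ω, T.restrict (R · ω))) :=
  ent_eq_of_mutually_determined
    (fun u => (u ⟨a, mem_insert_self a T⟩, fun e => u ⟨e, mem_insert_of_mem e.2⟩))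
    (fun t e => if h : e.1 ∈ T then t.2 ⟨e, h⟩ else t.1) (fun _ _ => rfl)
    (fun ω _ => (dite_mem_restrict_eq_restrict_insert (R · ω) a T).symm)

lemma ent_pair_restrict_insert (W : Ω → α) (R : ι → Ω → ρ) (a : ι) (T : Finset ι) :
    ent p (fun ω => (W ω, (insert a T).restrict (R · ω))) =
      ent p (fun ω => (W ω, R a ω, T.restrict (R · ω))) :=
  ent_eq_of_mutually_determined
    (fun u => (u.1, u.2 ⟨a, mem_insert_self a T⟩, fun e => u.2 ⟨e, mem_insert_of_mem e.2⟩))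
    (fun t => (t.1, fun e => if h : e.1 ∈ T then t.2.2 ⟨e, h⟩ else t.2.1)) (fun _ _ => rfl)
    (fun ω _ => by rw [dite_mem_restrict_eq_restrict_insert])

lemma ent_restrict_le_sum (hp : IsProb p) (R : ι → Ω → ρ) (S : Finset ι) :
    ent p (fun ω => S.restrict (R · ω)) ≤ ∑ e ∈ S, ent p (R e) := by
  induction S using Finset.induction_on with
  | empty => simp [ent_of_subsingleton hp]
  | insert a S ha ih =>
    rw [ent_restrict_insert, sum_insert ha]
    linarith [ent_pair_le_add hp (R a) (fun ω => S.restrict (R · ω))]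

noncomputable def entWith (p : Ω → ℝ) (W : Ω → α) (R : ι → Ω → ρ) (S : Finset ι) : ℝ :=
  ent p (fun ω => (W ω, S.restrict (R · ω)))

lemma entWith_empty (W : Ω → α) (R : ι → Ω → ρ) : entWith p W R ∅ = ent p W :=
  ent_eq_of_mutually_determined Prod.fst (fun w => (w, fun e => absurd e.2 (notMem_empty e.1)))
    (fun _ _ => rfl) (fun _ _ => Prod.ext rfl (Subsingleton.elim _ _))

lemma entWith_insert_add_le (h0 : ∀ ω, 0 ≤ p ω) (W : Ω → α) (R : ι → Ω → ρ) (a : ι)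
    {T' T : Finset ι} (hsub : T' ⊆ T) :
    entWith p W R (insert a T) + entWith p W R T' ≤
      entWith p W R (insert a T') + entWith p W R T := by
  have h := ent_submodular h0 (R a) (fun ω => (W ω, T'.restrict (R · ω)))
    (fun ω => T.restrict (R · ω))
  have hXYZ : ent p (fun ω => (R a ω, (W ω, T'.restrict (R · ω)), T.restrict (R · ω))) =
      entWith p W R (insert a T) := by
    rw [entWith, ent_pair_restrict_insert]
    exact ent_eq_of_mutually_determined (fun t => (t.2.1.1, t.1, t.2.2))
      (fun t => (t.2.1, (t.1, fun e => t.2.2 ⟨e, hsub e.2⟩), t.2.2))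
      (fun _ _ => rfl) (fun _ _ => rfl)
  have hXY : ent p (fun ω => (R a ω, W ω, T'.restrict (R · ω))) = entWith p W R (insert a T') := by
    rw [entWith, ent_pair_restrict_insert]
    exact ent_eq_of_mutually_determined (fun t => (t.2.1, t.1, t.2.2))
      (fun t => (t.2.1, t.1, t.2.2)) (fun _ _ => rfl) (fun _ _ => rfl)
  have hYZ : ent p (fun ω => ((W ω, T'.restrict (R · ω)), T.restrict (R · ω))) =
      entWith p W R T :=
    ent_eq_of_mutually_determined (fun t => (t.1.1, t.2))
      (fun t => ((t.1, fun e => t.2 ⟨e, hsub e.2⟩), t.2)) (fun _ _ => rfl) (fun _ _ => rfl)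
  rwa [hXYZ, hXY, hYZ] at h

end Restrict

section Telescope

variable {ι : Type*} [LinearOrder ι] [DecidableEq ι]

lemma sub_empty_eq_sum_filter_lt (A : Finset ι → ℝ) (S : Finset ι) :
    A S - A ∅ = ∑ e ∈ S, (A (insert e (S.filter (· < e))) - A (S.filter (· < e))) := by
  induction S using Finset.induction_on_max with
  | empty => simp
  | insert a s hlt ih =>
    have ha : a ∉ s := fun h => lt_irrefl a (hlt a h)
    have hfa : (insert a s).filter (· < a) = s := by
      rw [filter_insert, if_neg (lt_irrefl a), filter_true_of_mem hlt]
    have hfe : ∀ e ∈ s, (insert a s).filter (· < e) = s.filter (· < e) := fun e he => by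
      rw [filter_insert, if_neg (hlt e he).not_gt]
    rw [sum_insert ha, hfa, sum_congr rfl fun e he => by rw [hfe e he], ← ih]
    ring

lemma sum_filter_lt_le_of_submodular [Fintype ι] (A : Finset ι → ℝ)
    (hA : ∀ a T' T, T' ⊆ T → A (insert a T) + A T' ≤ A (insert a T') + A T) (S : Finset ι) :
    ∑ e ∈ S, (A (insert e (univ.filter (· < e))) - A (univ.filter (· < e))) ≤ A S - A ∅ := by
  rw [sub_empty_eq_sum_filter_lt A S]
  refine sum_le_sum fun e _ => ?_
  linarith [hA e _ _ (filter_subset_filter (· < e) (subset_univ S))]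

end Telescope

section LocalViews

variable {Ω ι ρ α : Type*} [Fintype Ω] [Fintype ι] [DecidableEq ι] [Fintype ρ] [DecidableEq ρ]
  [Fintype α] [DecidableEq α] {p : Ω → ℝ}

/-- The mutual information `I(R e ; W, (R e')_{e' < e})`. -/
noncomputable def prefixInfo [LinearOrder ι] (p : Ω → ℝ) (W : Ω → α) (R : ι → Ω → ρ) (e : ι) :
    ℝ :=
  ent p (R e) - (entWith p W R (insert e (univ.filter (· < e))) -
    entWith p W R (univ.filter (· < e)))

lemma ent_sub_sum_prefixInfo_le_condEnt [LinearOrder ι] (hp : IsProb p) (W : Ω → α)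
    (R : ι → Ω → ρ) (S : Finset ι) :
    ent p W - ∑ e ∈ S, prefixInfo p W R e ≤ condEnt p W (fun ω => S.restrict (R · ω)) := by
  have hincr := sum_filter_lt_le_of_submodular (entWith p W R)
    (fun a _ _ hsub => entWith_insert_add_le hp.1 W R a hsub) S
  rw [entWith_empty] at hincr
  have hR := ent_restrict_le_sum hp R S
  simp only [prefixInfo, sum_sub_distrib] at hincr ⊢
  rw [condEnt]
  change _ ≤ entWith p W R S - _
  linarith

lemma sum_prefixInfo_le_ent [LinearOrder ι] (h0 : ∀ ω, 0 ≤ p ω) (W : Ω → α) (R : ι → Ω → ρ)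
    (hindep : ∀ x : ι → ρ, pmass p (fun ω e => R e ω) x = ∏ e, pmass p (R e) (x e)) :
    ∑ e, prefixInfo p W R e ≤ ent p W := by
  have htel := sub_empty_eq_sum_filter_lt (entWith p W R) univ
  rw [entWith_empty] at htel
  have huniv : ent p (fun ω e => R e ω) = ent p (fun ω => (univ : Finset ι).restrict (R · ω)) :=
    ent_eq_of_mutually_determined (fun u => univ.restrict u) (fun t e => t ⟨e, mem_univ e⟩)
      (fun _ _ => rfl) (fun _ _ => rfl)
  have hR := ent_le_ent_pair h0 W (fun ω => (univ : Finset ι).restrict (R · ω))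
  rw [← huniv, ent_pi_eq_sum_of_indep h0 R hindep] at hR
  simp only [prefixInfo, sum_sub_distrib] at htel ⊢
  change _ ≤ entWith p W R univ at hR
  linarith

theorem card_sub_mul_ent_le_sum_condEnt {κ : Type*} [Fintype κ] (hp : IsProb p)
    (R : ι → Ω → ρ)
    (hindep : ∀ x : ι → ρ, pmass p (fun ω e => R e ω) x = ∏ e, pmass p (R e) (x e))
    (W : Ω → α) (V : κ → ι → Prop) [∀ i, DecidablePred (V i)] (k : ℕ)
    (hV : ∀ e, (univ.filter fun i => V i e).card = k) :
    ((Fintype.card κ : ℝ) - k) * ent p W ≤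
      ∑ i, condEnt p W (fun ω (e : {e // V i e}) => R e ω) := by
  let _ : LinearOrder ι := LinearOrder.lift' _ (Fintype.equivFin ι).injective
  have hview : ∀ i, condEnt p W (fun ω (e : {e // V i e}) => R e ω) =
      condEnt p W (fun ω => (univ.filter (V i)).restrict (R · ω)) := fun i =>
    condEnt_congr_right (fun t e => t ⟨e, (mem_filter.mp e.2).2⟩)
      (fun u e => u ⟨e, mem_filter.mpr ⟨mem_univ _, e.2⟩⟩) (fun _ _ => rfl) (fun _ _ => rfl)
  have hcount : ∑ i, ∑ e ∈ univ.filter (V i), prefixInfo p W R e =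
      k * ∑ e, prefixInfo p W R e := by
    rw [sum_comm' (t' := univ) (s' := fun e => univ.filter fun i => V i e) (by simp), mul_sum]
    simp [hV]
  have hlocal := sum_le_sum fun i (_ : i ∈ univ) =>
    (ent_sub_sum_prefixInfo_le_condEnt hp W R (univ.filter (V i))).trans (hview i).ge
  rw [sum_sub_distrib, hcount, sum_const, card_univ, nsmul_eq_mul] at hlocal
  have htotal := mul_le_mul_of_nonneg_left (sum_prefixInfo_le_ent hp.1 W R hindep)
    (Nat.cast_nonneg (α := ℝ) k)
  linarith

end LocalViews

section Protocol

variable {Ω μ α γ κ : Type*} [Fintype Ω] [Fintype μ] [DecidableEq μ] [Fintype α] [DecidableEq α]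
  [Fintype γ] [DecidableEq γ] [Fintype κ] {β : κ → Type*} [∀ i, Fintype (β i)]
  [∀ i, DecidableEq (β i)] {p : Ω → ℝ} {T : ℕ}

def history (M : Fin T → Ω → μ) (j : Fin T) : Ω → Fin j → μ :=
  fun ω l => M ⟨l, l.isLt.trans j.isLt⟩ ω

lemma condEnt_pi_eq_sum_history (M : Fin T → Ω → μ) (Z : Ω → γ) :
    condEnt p (fun ω j => M j ω) Z = ∑ j, condEnt p (M j) (fun ω => (history M j ω, Z ω)) := by
  induction T with
  | zero =>
    rw [univ_eq_empty, sum_empty]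
    exact condEnt_eq_zero_of_determined fun _ _ _ _ _ => Subsingleton.elim _ _
  | succ T ih =>
    have hsnoc : ent p (fun ω => ((fun j => M j ω), Z ω)) =
        ent p (fun ω => (M (Fin.last T) ω, history M (Fin.last T) ω, Z ω)) :=
      ent_eq_of_mutually_determined (fun t => (t.1 (Fin.last T), Fin.init t.1, t.2))
        (fun t => (Fin.snoc t.2.1 t.1, t.2.2)) (fun _ _ => rfl)
        (fun ω _ => Prod.ext (Fin.snoc_init_self (α := fun _ => μ) (fun j => M j ω)).symm rfl)
    have ih' : condEnt p (fun ω j => M (Fin.castSucc j) ω) Z =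
        ∑ j : Fin T, condEnt p (M j.castSucc) (fun ω => (history M j.castSucc ω, Z ω)) := ih _
    rw [Fin.sum_univ_castSucc, ← ih']
    have hlast : ent p (fun ω => (history M (Fin.last T) ω, Z ω)) =
        ent p (fun ω => ((fun j => M (Fin.castSucc j) ω), Z ω)) := rfl
    simp only [condEnt, hsnoc, hlast]
    ring

lemma sum_condEnt_le_of_condEnt_eq_zero (hp : IsProb p) (U : Ω → α) (Y : (i : κ) → Ω → β i)
    (i₀ : κ) (h : condEnt p U (Y i₀) = 0) :
    ∑ i, condEnt p U (Y i) ≤ (Fintype.card κ - 1) * ent p U := by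
  classical
  have hle := sum_le_card_nsmul (univ.erase i₀) (fun i => condEnt p U (Y i)) (ent p U)
    fun i _ => condEnt_le_ent hp U (Y i)
  rw [card_erase_of_mem (mem_univ i₀), card_univ, nsmul_eq_mul,
    Nat.cast_pred (Fintype.card_pos_iff.mpr ⟨i₀⟩)] at hle
  rwa [← sum_erase_add _ _ (mem_univ i₀), h, add_zero]

lemma sum_condEnt_pair_le_of_writer (h0 : ∀ ω, 0 ≤ p ω) (U : Ω → α) (Z : Ω → γ)
    (Y : (i : κ) → Ω → β i) (w : γ → κ)
    (hw : ∀ z ω ω', p ω ≠ 0 → p ω' ≠ 0 → Z ω = z → Z ω' = z → Y (w z) ω = Y (w z) ω' →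
      U ω = U ω') :
    ∑ i, condEnt p U (fun ω => (Z ω, Y i ω)) ≤ (Fintype.card κ - 1) * condEnt p U Z := by
  simp_rw [condEnt_pair_eq_sum_condp h0, condEnt_eq_sum_condp h0]
  rw [sum_comm, mul_sum]
  refine sum_le_sum fun z _ => ?_
  by_cases hz : pmass p Z z = 0
  · simp [hz]
  have hwriter : condEnt (condp p Z z) U (Y (w z)) = 0 :=
    condEnt_eq_zero_of_determined fun ω ω' hω hω' =>
      have ⟨hz, hpω⟩ := eq_and_ne_zero_of_condp_ne_zero hω
      have ⟨hz', hpω'⟩ := eq_and_ne_zero_of_condp_ne_zero hω'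
      hw z ω ω' hpω hpω' hz hz'
  rw [← mul_sum, mul_left_comm]
  exact mul_le_mul_of_nonneg_left
    (sum_condEnt_le_of_condEnt_eq_zero (condp_isProb h0 hz) U Y (w z) hwriter)
    (pmass_nonneg h0 Z z)

theorem sum_condEnt_le_mul_ent_of_writer (hp : IsProb p) (M : Fin T → Ω → μ)
    (Y : (i : κ) → Ω → β i)
    (hw : ∀ j : Fin T, ∃ w : (Fin j → μ) → κ, ∀ pre ω ω', p ω ≠ 0 → p ω' ≠ 0 →
      history M j ω = pre → history M j ω' = pre → Y (w pre) ω = Y (w pre) ω' → M j ω = M j ω') :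
    ∑ i, condEnt p (fun ω j => M j ω) (Y i) ≤
      (Fintype.card κ - 1) * ent p (fun ω j => M j ω) := by
  rw [← condEnt_const hp (fun ω j => M j ω), condEnt_pi_eq_sum_history]
  simp_rw [condEnt_pi_eq_sum_history M (Y _)]
  rw [sum_comm, mul_sum]
  refine sum_le_sum fun j _ => ?_
  obtain ⟨w, hwj⟩ := hw j
  rw [condEnt_congr_right (Y := fun ω => (history M j ω, ())) Prod.fst (fun z => (z, ()))
    (fun _ _ => rfl) (fun _ _ => rfl)]
  exact sum_condEnt_pair_le_of_writer hp.1 (M j) (history M j) Y w hwj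

end Protocol

theorem stmt_19_general {Ω ρ μ χ : Type*} [Fintype Ω] [Fintype ρ] [Fintype μ] [Fintype χ]
    [DecidableEq ρ] [DecidableEq μ] [DecidableEq χ]
    (p : Ω → ℝ) (hp : IsProb p) (n k T : ℕ) (hkn : k ≤ n)
    (R : Edge n k → Ω → ρ)
    (hindep : ∀ x : Edge n k → ρ,
      pmass p (fun ω => fun e => R e ω) x = ∏ e, pmass p (R e) (x e))
    (M : Fin T → Ω → μ)
    -- blackboard protocol: at round `j` the writer `istar` is determined by the
    -- transcript so far, and the written symbol depends only on the transcript
    -- and the writer's local randomness `(R e)_{istar ∈ e}`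
    (hproto : ∀ j : Fin T, ∃ (istar : (Fin j.val → μ) → Fin n)
        (f : (Fin j.val → μ) → (Edge n k → ρ) → μ),
      (∀ pre r r', (∀ e : Edge n k, istar pre ∈ e.1 → r e = r' e) → f pre r = f pre r') ∧
      (∀ ω, p ω ≠ 0 →
        M j ω = f (fun l => M ⟨l.val, l.isLt.trans j.isLt⟩ ω) (fun e => R e ω)))
    (X : Ω → χ)
    (hX : ∀ i : Fin n, ∃ g : ({e : Edge n k // i ∈ e.1} → ρ) → (Fin T → μ) → χ,
      ∀ ω, p ω ≠ 0 → X ω = g (fun e => R e.1 ω) (fun j => M j ω)) :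
    ((n : ℝ) - (k : ℝ)) / ((n : ℝ) - 1) * ent p X ≤
      ent p (fun ω => fun j => M j ω) := by
  rcases Nat.lt_or_ge n 2 with hn | hn
  -- the coefficient vanishes: `k = n = 0`, or division by zero when `n = 1`
  · obtain rfl | rfl : n = 0 ∨ n = 1 := by omega
    · obtain rfl : k = 0 := by omega
      simpa using ent_nonneg hp _
    · simpa using ent_nonneg hp _
  let view (i : Fin n) (ω : Ω) (e : {e : Edge n k // i ∈ e.1}) : ρ := R e.1 ω
  have hsecret : ((n : ℝ) - k) * ent p X ≤ ∑ i, condEnt p X (view i) := by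
    simpa using card_sub_mul_ent_le_sum_condEnt hp R hindep X (fun i e => i ∈ e.1) k
      fun e => by simp [e.2]
  have hlocal : ∀ i, condEnt p X (view i) ≤ condEnt p (fun ω j => M j ω) (view i) := fun i =>
    have ⟨g, hg⟩ := hX i
    condEnt_le_condEnt_of_determined hp.1 g hg
  have htranscript : ∑ i, condEnt p (fun ω j => M j ω) (view i) ≤
      ((n : ℝ) - 1) * ent p (fun ω j => M j ω) := by
    simpa using sum_condEnt_le_mul_ent_of_writer hp M view fun j => by
      obtain ⟨istar, f, hloc, hM⟩ := hproto j
      refine ⟨istar, fun pre ω ω' hω hω' hpre hpre' hview => ?_⟩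
      rw [hM ω hω, hM ω' hω']
      change f (history M j ω) _ = f (history M j ω') _
      rw [hpre, hpre']
      exact hloc pre _ _ fun e he => congrFun hview ⟨e, he⟩
  have hn1 : (0 : ℝ) < n - 1 := by
    have : (2 : ℝ) ≤ n := by exact_mod_cast hn
    linarith
  rw [div_mul_eq_mul_div, div_le_iff₀ hn1]
  linarith [sum_le_sum fun i (_ : i ∈ univ) => hlocal i]

theorem stmt_19 {Ω ρ μ χ : Type*} [Fintype Ω] [Fintype ρ] [Fintype μ] [Fintype χ]
    [DecidableEq ρ] [DecidableEq μ] [DecidableEq χ]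
    (p : Ω → ℝ) (hp : IsProb p) (n k T : ℕ) (hk1 : 1 ≤ k) (hkn : k ≤ n)
    (R : Edge n k → Ω → ρ)
    (hindep : ∀ x : Edge n k → ρ,
      pmass p (fun ω => fun e => R e ω) x = ∏ e, pmass p (R e) (x e))
    (M : Fin T → Ω → μ)
    -- blackboard protocol: at round `j` the writer `istar` is determined by the
    -- transcript so far, and the written symbol depends only on the transcript
    -- and the writer's local randomness `(R e)_{istar ∈ e}`
    (hproto : ∀ j : Fin T, ∃ (istar : (Fin j.val → μ) → Fin n)
        (f : (Fin j.val → μ) → (Edge n k → ρ) → μ),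
      (∀ pre r r', (∀ e : Edge n k, istar pre ∈ e.1 → r e = r' e) → f pre r = f pre r') ∧
      (∀ ω, p ω ≠ 0 →
        M j ω = f (fun l => M ⟨l.val, l.isLt.trans j.isLt⟩ ω) (fun e => R e ω)))
    (X : Ω → χ)
    (hX : ∀ i : Fin n, ∃ g : ({e : Edge n k // i ∈ e.1} → ρ) → (Fin T → μ) → χ,
      ∀ ω, p ω ≠ 0 → X ω = g (fun e => R e.1 ω) (fun j => M j ω)) :
    ((n : ℝ) - (k : ℝ)) / ((n : ℝ) - 1) * ent p X ≤
      ent p (fun ω => fun j => M j ω) :=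
  stmt_19_general p hp n k T hkn R hindep M hproto X hX
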